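/- arXiv:2501.10333 — 2 statements merged into one kernel-verified Lean document; each statement's English description precedes it below -/
import Mathlib

section
/- For every integer n ≥ 1 and every prime p ≥ n+2, if δ_0(n,p) > δ_1(n,p) then δ_1(n, p+1) > δ_1(n, p). -/
/-!
Let `L = lcm {n + 1, …, p - 1}`. The prime `p` exceeds every element of `(n, p)`, so it is
coprime to `L`; hence `lcm {n + 1, …, p} = L p`, and by the Chinese remainder theorem the residues
of `x` modulo `L` and modulo `p` are independent. An integer has exactly one divisor in
`(n, p + 1)` iff it has one in `(n, p)` and `p ∤ x`, or none in `(n, p)` and `p ∣ x`; hence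
`δ₁(n, p + 1) = δ₁(n, p) (1 - 1/p) + δ₀(n, p) / p`, which exceeds `δ₁(n, p)` when
`δ₀(n, p) > δ₁(n, p)`.
-/

/-- `Llcm n m` is the least common multiple of the integers strictly between `n` and `m`,
i.e. of `{n+1, ..., m-1}`. -/
def Llcm (n m : ℕ) : ℕ := (Finset.Ioo n m).lcm id

/-- `delta r n m` is the density `δ_r(n,m)` of positive integers with exactly `r`
divisors in the open interval `(n, m)`: the proportion of `x ∈ {1, ..., Llcm n m}`
having exactly `r` divisors `d` with `n < d < m`. -/
def delta (r n m : ℕ) : ℚ :=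
  (((Finset.Icc 1 (Llcm n m)).filter
      (fun x => ((Finset.Ioo n m).filter (fun d => d ∣ x)).card = r)).card : ℚ) /
    (Llcm n m : ℚ)

open Finset Function

lemma injOn_mod_mod_range_mul {a b : ℕ} (hab : a.Coprime b) :
    Set.InjOn (fun x => (x % a, x % b)) (range (a * b)) := by
  intro x hx y hy hxy
  simp only [Prod.mk.injEq] at hxy
  simp only [coe_range, Set.mem_Iio] at hx hy
  exact ((Nat.modEq_and_modEq_iff_modEq_mul hab).mp hxy).eq_of_lt_of_lt hx hy

lemma image_mod_mod_range_mul {a b : ℕ} (hab : a.Coprime b) :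
    (range (a * b)).image (fun x => (x % a, x % b)) = range a ×ˢ range b := by
  rcases Nat.eq_zero_or_pos a with rfl | ha
  · simp
  rcases Nat.eq_zero_or_pos b with rfl | hb
  · simp
  refine eq_of_subset_of_card_le (fun q hq => ?_) ?_
  · obtain ⟨x, -, rfl⟩ := mem_image.mp hq
    exact mem_product.mpr ⟨mem_range.mpr (x.mod_lt ha), mem_range.mpr (x.mod_lt hb)⟩
  · rw [card_image_of_injOn (injOn_mod_mod_range_mul hab), card_product, card_range, card_range,
      card_range]

lemma count_and_of_periodic {a b : ℕ} (hab : a.Coprime b) {P Q : ℕ → Prop}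
    [DecidablePred P] [DecidablePred Q] (hP : Periodic P a) (hQ : Periodic Q b) :
    Nat.count (fun x => P x ∧ Q x) (a * b) = Nat.count P a * Nat.count Q b := by
  simp only [Nat.count_eq_card_filter_range]
  rw [← card_product, ← filter_product, ← image_mod_mod_range_mul hab, filter_image,
    card_image_of_injOn ((injOn_mod_mod_range_mul hab).mono (filter_subset _ _))]
  simp only [hP.map_mod_nat, hQ.map_mod_nat]

lemma count_or_of_disjoint {P Q : ℕ → Prop} [DecidablePred P] [DecidablePred Q]
    (h : ∀ x, P x → ¬Q x) (n : ℕ) :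
    Nat.count (fun x => P x ∨ Q x) n = Nat.count P n + Nat.count Q n := by
  simp only [Nat.count_eq_card_filter_range]
  rw [filter_or, card_union_of_disjoint (disjoint_filter.mpr fun x _ => h x)]

lemma count_dvd_self {m : ℕ} (hm : 0 < m) : Nat.count (m ∣ ·) m = 1 := by
  rw [Nat.count_eq_card_filter_range, card_eq_one]
  refine ⟨0, ext fun x => ?_⟩
  simp only [mem_filter, mem_range, mem_singleton]
  exact ⟨fun ⟨hx, hd⟩ => Nat.eq_zero_of_dvd_of_lt hd hx, fun h => h ▸ ⟨hm, dvd_zero m⟩⟩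

lemma count_not_dvd_self {m : ℕ} (hm : 0 < m) : Nat.count (¬m ∣ ·) m = m - 1 := by
  have h := card_filter_add_card_filter_not (s := range m) (m ∣ ·)
  rw [← Nat.count_eq_card_filter_range, count_dvd_self hm, card_range] at h
  rw [Nat.count_eq_card_filter_range]
  omega

def dvdCount (s : Finset ℕ) (x : ℕ) : ℕ := #{d ∈ s | d ∣ x}

lemma dvdCount_periodic (s : Finset ℕ) : Periodic (dvdCount s) (s.lcm id) := fun x => by
  simp only [dvdCount]
  exact congrArg card <| filter_congr fun d hd => Nat.dvd_add_left (dvd_lcm hd)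

lemma periodic_dvdCount_eq (s : Finset ℕ) (r : ℕ) :
    Periodic (fun x => dvdCount s x = r) (s.lcm id) :=
  (dvdCount_periodic s).comp (· = r)

lemma dvdCount_insert {s : Finset ℕ} {m : ℕ} (hm : m ∉ s) (x : ℕ) :
    dvdCount (insert m s) x = dvdCount s x + if m ∣ x then 1 else 0 := by
  unfold dvdCount
  rw [filter_insert]
  split_ifs
  · exact card_insert_of_notMem fun h => hm (mem_filter.mp h).1
  · rfl

lemma count_dvdCount_insert_eq_one {s : Finset ℕ} {m : ℕ} (hm0 : 0 < m) (hm : m ∉ s)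
    (hcop : (s.lcm id).Coprime m) :
    Nat.count (fun x => dvdCount (insert m s) x = 1) (s.lcm id * m) =
      Nat.count (fun x => dvdCount s x = 1) (s.lcm id) * (m - 1) +
        Nat.count (fun x => dvdCount s x = 0) (s.lcm id) := by
  have hsplit : ∀ x, dvdCount (insert m s) x = 1 ↔
      (dvdCount s x = 1 ∧ ¬m ∣ x) ∨ (dvdCount s x = 0 ∧ m ∣ x) := by
    intro x
    rw [dvdCount_insert hm]
    split_ifs <;> simp [*]
  have hdvd : Periodic (m ∣ ·) m := fun x => propext Nat.dvd_add_self_right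
  simp only [hsplit]
  rw [count_or_of_disjoint (fun x h h' => by omega),
    count_and_of_periodic hcop (periodic_dvdCount_eq s 1) (fun x => congrArg Not (hdvd x)),
    count_and_of_periodic hcop (periodic_dvdCount_eq s 0) hdvd,
    count_not_dvd_self hm0, count_dvd_self hm0, mul_one]

lemma Llcm_pos (n m : ℕ) : 0 < Llcm n m := by
  refine Nat.pos_of_ne_zero fun h => ?_
  obtain ⟨d, hd, hd0⟩ := lcm_eq_zero_iff.mp h
  exact absurd hd0 (mem_Ioo.mp hd).1.ne_bot

lemma Llcm_coprime_of_prime {n p : ℕ} (hp : p.Prime) : (Llcm n p).Coprime p :=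
  Nat.Coprime.coprime_dvd_left (lcm_dvd_prod _ _) <| Nat.Coprime.prod_left fun _ hd =>
    (Nat.coprime_of_lt_prime (Nat.zero_lt_of_lt (mem_Ioo.mp hd).1).ne' (mem_Ioo.mp hd).2 hp).symm

lemma delta_eq_count (r n m : ℕ) :
    delta r n m = Nat.count (fun x => dvdCount (Ioo n m) x = r) (Llcm n m) / Llcm n m := by
  have h := Nat.filter_Ico_card_eq_of_periodic 1 (Llcm n m) _ (periodic_dvdCount_eq (Ioo n m) r)
  rw [delta, ← h]
  congr 4
  ext x
  simp only [mem_Icc, mem_Ico]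
  omega

theorem delta_one_increases_at_prime_general (n p : ℕ) (hp : p.Prime)
    (hpn : n + 2 ≤ p) (h : delta 1 n p < delta 0 n p) :
    delta 1 n p < delta 1 n (p + 1) := by
  have hIoo : Ioo n (p + 1) = insert p (Ioo n p) := by
    ext x
    simp only [mem_Ioo, mem_insert]
    omega
  have hp_notMem : p ∉ Ioo n p := fun hmem => (mem_Ioo.mp hmem).2.false
  have hcop : (Llcm n p).Coprime p := Llcm_coprime_of_prime hp
  have hLlcm : Llcm n (p + 1) = Llcm n p * p := by
    rw [Llcm, hIoo, lcm_insert, lcm_eq_nat_lcm, id, mul_comm, ← hcop.symm.lcm_eq_mul]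
    rfl
  have hL : (0 : ℚ) < Llcm n p := by exact_mod_cast Llcm_pos n p
  rw [delta_eq_count, delta_eq_count] at h ⊢
  rw [hLlcm, hIoo]
  unfold Llcm at h hL ⊢
  rw [count_dvdCount_insert_eq_one hp.pos hp_notMem hcop]
  set L := (Ioo n p).lcm id
  set b₁ := Nat.count (fun x => dvdCount (Ioo n p) x = 1) L
  set b₀ := Nat.count (fun x => dvdCount (Ioo n p) x = 0) L
  have hb : (b₁ : ℚ) < b₀ := (div_lt_div_iff_of_pos_right hL).mp h
  rw [div_lt_div_iff₀ hL (by push_cast; exact mul_pos hL (by exact_mod_cast hp.pos))]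
  push_cast [hp.one_lt.le]
  nlinarith [mul_lt_mul_of_pos_right hb hL]

/-- For every `n ≥ 1` and every prime `p ≥ n+2`, if `δ_0(n,p) > δ_1(n,p)`
then `δ_1(n, p+1) > δ_1(n, p)`. -/
theorem delta_one_increases_at_prime (n p : ℕ) (hn : 1 ≤ n) (hp : p.Prime)
    (hpn : n + 2 ≤ p) (h : delta 1 n p < delta 0 n p) :
    delta 1 n p < delta 1 n (p + 1) :=
  delta_one_increases_at_prime_general n p hp hpn h
end

section
/- For each k ∈ {1, 2, 3}, the sequence (d_k(p_i))_{i ≥ k−1} is unimodal: there is an index i* such that d_k(p_i) ≤ d_k(p_{i+1}) for all k−1 ≤ i < i* and d_k(p_i) ≥ d_k(p_{i+1}) for all i ≥ i*. -/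
/-- `pp i` is the `i`-th prime (`pp 0 = 2`, `pp 1 = 3`, `pp 2 = 5`, ...). -/
noncomputable def pp (i : ℕ) : ℕ := Nat.nth Nat.Prime i

/-- `PP i = p₀ · p₁ ⋯ p_i`, the product of the first `i+1` primes. -/
noncomputable def PP (i : ℕ) : ℕ := ∏ j ∈ Finset.range (i + 1), pp j

/-- `del r i` is the density `δ_r(i)` of positive integers having exactly `r`
prime divisors among `p₀, ..., p_i`: the proportion of `x ∈ {1, ..., PP i}`
divisible by exactly `r` of the primes `p₀, ..., p_i`. -/
noncomputable def del (r i : ℕ) : ℚ :=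
  (((Finset.Icc 1 (PP i)).filter
      (fun x => ((Finset.range (i + 1)).filter (fun j => pp j ∣ x)).card = r)).card : ℚ) /
    (PP i : ℚ)

/-- `dd k i` is the density `d_k(p_i)` of positive integers whose `k`-th smallest
prime factor is `p_i`: the proportion of `x ∈ {1, ..., PP i}` divisible by `p_i`
and by exactly `k-1` of the primes `p₀, ..., p_{i-1}`. -/
noncomputable def dd (k i : ℕ) : ℚ :=
  (((Finset.Icc 1 (PP i)).filter
      (fun x => pp i ∣ x ∧
        ((Finset.range i).filter (fun j => pp j ∣ x)).card = k - 1)).card : ℚ) /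
    (PP i : ℚ)

/-!
Let `m_r(i) = exactDivCount r i` be the number of residues modulo `p₀ ⋯ p_{i-1}` divisible by
exactly `r` of these primes. Writing the multiples of `p_i` as `y p_i` gives
`d_{r+1}(p_i) = m_r(i) / (p₀ ⋯ p_i)`, and sorting the residues modulo `p₀ ⋯ p_i` by divisibility
by `p_i` gives the recursion `m_r(i+1) = (p_i - 1) m_r(i) + m_{r-1}(i)`. It propagates
`m_0(i) ≤ m_1(i)` for `i ≥ 1` and `m_1(i) ≤ 3 m_2(i)` for `i ≥ 2`, hence
`m_r(i+1) ≤ (p_i + r) m_r(i) ≤ p_{i+1} m_r(i)` for `r ≤ 2` (odd primes are at least 2 apart).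
So `d_{r+1}(p_i)` is nonincreasing for `i ≥ r`, and `i* = 0`.
-/

open Finset Function

namespace Nat

variable {p : ℕ → Prop} [DecidablePred p]

theorem count_mul_of_periodic {a : ℕ} (h : Periodic p a) (n : ℕ) :
    count p (n * a) = n * count p a := by
  induction n with
  | zero => simp
  | succ n ih =>
    rw [add_one_mul, count_add, ih, add_one_mul]
    congr 2
    funext k
    rw [add_comm]
    simpa using (h.nat_mul n) k

theorem count_and_add_count_and_not (q : ℕ → Prop) [DecidablePred q] (n : ℕ) :
    count (fun x => q x ∧ p x) n + count (fun x => ¬q x ∧ p x) n = count p n := by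
  induction n with
  | zero => simp
  | succ n ih =>
    simp only [count_succ]
    by_cases hq : q n <;> by_cases hp : p n <;> simp [hq, hp] <;> omega

theorem count_dvd_and {d : ℕ} (hd : 0 < d) (n : ℕ) :
    count (fun x => d ∣ x ∧ p x) (n * d) = count (fun y => p (y * d)) n := by
  rw [count_eq_card_filter_range, count_eq_card_filter_range, eq_comm,
    ← card_map ⟨(· * d), mul_left_injective₀ hd.ne'⟩]
  congr 1
  ext x
  simp only [mem_filter, mem_range, mem_map, Embedding.coeFn_mk]
  constructor
  · rintro ⟨y, ⟨hy, hpy⟩, rfl⟩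
    exact ⟨Nat.mul_lt_mul_of_pos_right hy hd, dvd_mul_left _ _, hpy⟩
  · rintro ⟨hx, ⟨y, rfl⟩, hpx⟩
    rw [mul_comm] at hx hpx
    exact ⟨y, ⟨Nat.lt_of_mul_lt_mul_right hx, hpx⟩, mul_comm _ _⟩

theorem card_filter_Icc_one_eq_count {a : ℕ} (h : Periodic p a) :
    #{x ∈ Icc 1 a | p x} = count p a := by
  rw [← Ico_add_one_right_eq_Icc, add_comm, filter_Ico_card_eq_of_periodic 1 a p h]

end Nat

lemma pp_prime (i : ℕ) : (pp i).Prime := Nat.prime_nth_prime i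

lemma pp_pos (i : ℕ) : 0 < pp i := (pp_prime i).pos

lemma pp_strictMono : StrictMono pp := Nat.nth_strictMono Nat.infinite_setOfPred_prime

lemma pp_zero : pp 0 = 2 := Nat.nth_prime_zero_eq_two

lemma pp_one : pp 1 = 3 := Nat.nth_prime_one_eq_three

lemma pp_coprime {i j : ℕ} (h : i ≠ j) : Nat.Coprime (pp i) (pp j) :=
  (Nat.coprime_primes (pp_prime i) (pp_prime j)).2 (pp_strictMono.injective.ne h)

lemma pp_add_two_le_pp_succ {i : ℕ} (hi : 1 ≤ i) : pp i + 2 ≤ pp (i + 1) := by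
  have hlt : pp i < pp (i + 1) := pp_strictMono (Nat.lt_succ_self i)
  have htwo : 2 < pp i := pp_zero ▸ pp_strictMono hi
  obtain ⟨a, ha⟩ := (pp_prime i).odd_of_ne_two htwo.ne'
  obtain ⟨b, hb⟩ := (pp_prime (i + 1)).odd_of_ne_two (by omega)
  omega

noncomputable def primeProd (i : ℕ) : ℕ := ∏ j ∈ range i, pp j

lemma primeProd_pos (i : ℕ) : 0 < primeProd i := prod_pos fun j _ => pp_pos j

lemma primeProd_succ (i : ℕ) : primeProd (i + 1) = PP i := rfl

lemma PP_eq_primeProd_mul (i : ℕ) : PP i = primeProd i * pp i := prod_range_succ _ _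

lemma PP_succ (i : ℕ) : PP (i + 1) = PP i * pp (i + 1) := prod_range_succ _ _

lemma PP_pos (i : ℕ) : 0 < PP i := by
  rw [PP_eq_primeProd_mul]
  exact Nat.mul_pos (primeProd_pos i) (pp_pos i)

noncomputable def primeDivCount (i x : ℕ) : ℕ := #{j ∈ range i | pp j ∣ x}

lemma primeDivCount_zero (x : ℕ) : primeDivCount 0 x = 0 := rfl

lemma primeDivCount_succ (i x : ℕ) :
    primeDivCount (i + 1) x = primeDivCount i x + if pp i ∣ x then 1 else 0 := by
  rw [primeDivCount, range_add_one, filter_insert]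
  split_ifs with h
  · rw [card_insert_of_notMem (by simp)]; rfl
  · rfl

lemma primeDivCount_periodic (i : ℕ) : Periodic (primeDivCount i) (primeProd i) := fun x => by
  refine congrArg card (filter_congr fun j hj => ?_)
  exact Nat.dvd_add_left (dvd_prod_of_mem pp hj)

lemma primeDivCount_mul_pp (i y : ℕ) : primeDivCount i (y * pp i) = primeDivCount i y := by
  refine congrArg card (filter_congr fun j hj => ?_)
  exact (pp_coprime (mem_range.1 hj).ne).dvd_mul_right

noncomputable def exactDivCount (r i : ℕ) : ℕ :=
  Nat.count (fun x => primeDivCount i x = r) (primeProd i)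

lemma count_dvd_and_primeDivCount (r i : ℕ) :
    Nat.count (fun x => pp i ∣ x ∧ primeDivCount i x = r) (PP i) = exactDivCount r i := by
  rw [PP_eq_primeProd_mul, Nat.count_dvd_and (pp_pos i)]
  simp only [primeDivCount_mul_pp, exactDivCount]

lemma count_primeDivCount_PP (r i : ℕ) :
    Nat.count (fun x => primeDivCount i x = r) (PP i) = pp i * exactDivCount r i := by
  rw [PP_eq_primeProd_mul, mul_comm, Nat.count_mul_of_periodic
    (fun x => congrArg (· = r) (primeDivCount_periodic i x))]
  rfl

lemma count_not_dvd_and_primeDivCount (r i : ℕ) :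
    Nat.count (fun x => ¬pp i ∣ x ∧ primeDivCount i x = r) (PP i) =
      (pp i - 1) * exactDivCount r i := by
  have hsplit := Nat.count_and_add_count_and_not (fun x => pp i ∣ x)
    (p := fun x => primeDivCount i x = r) (PP i)
  rw [count_dvd_and_primeDivCount, count_primeDivCount_PP] at hsplit
  rw [Nat.sub_one_mul]
  exact Nat.eq_sub_of_add_eq' hsplit

lemma exactDivCount_succ (r i : ℕ) :
    exactDivCount r (i + 1) = Nat.count (fun x => pp i ∣ x ∧ primeDivCount i x + 1 = r) (PP i)
      + (pp i - 1) * exactDivCount r i := by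
  rw [← count_not_dvd_and_primeDivCount, exactDivCount, primeProd_succ,
    ← Nat.count_and_add_count_and_not (fun x => pp i ∣ x)]
  congr 1 <;> congr 1 <;> funext x <;> simp +contextual [primeDivCount_succ]

lemma exactDivCount_zero_succ (i : ℕ) :
    exactDivCount 0 (i + 1) = (pp i - 1) * exactDivCount 0 i := by
  simp [exactDivCount_succ]

lemma exactDivCount_succ_succ (r i : ℕ) :
    exactDivCount (r + 1) (i + 1) = exactDivCount r i + (pp i - 1) * exactDivCount (r + 1) i := by
  simp [exactDivCount_succ, count_dvd_and_primeDivCount]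

lemma exactDivCount_zero_zero : exactDivCount 0 0 = 1 := rfl

lemma exactDivCount_succ_zero (r : ℕ) : exactDivCount (r + 1) 0 = 0 := by
  simp [exactDivCount, primeProd, primeDivCount_zero]

lemma exactDivCount_zero_le_one {i : ℕ} (hi : 1 ≤ i) : exactDivCount 0 i ≤ exactDivCount 1 i := by
  induction i, hi using Nat.le_induction with
  | base => simp [exactDivCount_zero_succ, exactDivCount_succ_succ, exactDivCount_succ_zero,
      exactDivCount_zero_zero, pp_zero]
  | succ i _ ih =>
    rw [exactDivCount_zero_succ, exactDivCount_succ_succ]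
    exact le_add_left (Nat.mul_le_mul_left _ ih)

lemma exactDivCount_one_le_three_mul_two {i : ℕ} (hi : 2 ≤ i) :
    exactDivCount 1 i ≤ 3 * exactDivCount 2 i := by
  induction i, hi using Nat.le_induction with
  | base => simp [exactDivCount_zero_succ, exactDivCount_succ_succ, exactDivCount_succ_zero,
      exactDivCount_zero_zero, pp_zero, pp_one]
  | succ i hi ih =>
    have h01 := exactDivCount_zero_le_one (i := i) (by omega)
    rw [exactDivCount_succ_succ 0, exactDivCount_succ_succ 1]
    nlinarith [Nat.mul_le_mul_left (pp i - 1) ih]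

lemma exactDivCount_succ_le_add_mul {r i : ℕ} (hr : r ≤ 2) (hri : r ≤ i) :
    exactDivCount r (i + 1) ≤ (pp i + r) * exactDivCount r i := by
  obtain ⟨q, hq⟩ : ∃ q, pp i = q + 1 := Nat.exists_eq_add_one.2 (pp_pos i)
  interval_cases r
  · rw [exactDivCount_zero_succ]
    exact Nat.mul_le_mul_right _ (by omega)
  · have h01 := exactDivCount_zero_le_one hri
    rw [exactDivCount_succ_succ, hq, Nat.add_sub_cancel]
    nlinarith
  · have h12 := exactDivCount_one_le_three_mul_two hri
    rw [exactDivCount_succ_succ, hq, Nat.add_sub_cancel]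
    nlinarith

lemma exactDivCount_succ_le {r i : ℕ} (hr : r ≤ 2) (hri : r ≤ i) :
    exactDivCount r (i + 1) ≤ pp (i + 1) * exactDivCount r i := by
  have hgap : pp i + r ≤ pp (i + 1) := by
    have hlt : pp i < pp (i + 1) := pp_strictMono (Nat.lt_succ_self i)
    interval_cases r
    · omega
    · omega
    · exact pp_add_two_le_pp_succ (by omega)
  exact (exactDivCount_succ_le_add_mul hr hri).trans (Nat.mul_le_mul_right _ hgap)

lemma dd_succ_eq (r i : ℕ) : dd (r + 1) i = exactDivCount r i / PP i := by
  rw [dd, ← count_dvd_and_primeDivCount, Nat.card_filter_Icc_one_eq_count]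
  · rfl
  intro x
  have hcount : primeDivCount i (x + PP i) = primeDivCount i x := by
    simpa [PP_eq_primeProd_mul, mul_comm] using (primeDivCount_periodic i).nat_mul (pp i) x
  change (pp i ∣ x + PP i ∧ primeDivCount i (x + PP i) = r) = (pp i ∣ x ∧ primeDivCount i x = r)
  rw [hcount, PP_eq_primeProd_mul, Nat.dvd_add_left (dvd_mul_left (pp i) _)]

lemma dd_succ_le {r i : ℕ} (hr : r ≤ 2) (hri : r ≤ i) : dd (r + 1) (i + 1) ≤ dd (r + 1) i := by
  have key : exactDivCount r (i + 1) * PP i ≤ exactDivCount r i * PP (i + 1) :=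
    calc exactDivCount r (i + 1) * PP i ≤ pp (i + 1) * exactDivCount r i * PP i :=
          Nat.mul_le_mul_right _ (exactDivCount_succ_le hr hri)
      _ = exactDivCount r i * PP (i + 1) := by rw [PP_succ]; ring
  rw [dd_succ_eq, dd_succ_eq, div_le_div_iff₀ (mod_cast PP_pos _) (mod_cast PP_pos _)]
  exact_mod_cast key

/-- For each `k ∈ {1,2,3}`, the sequence `(d_k(p_i))_{i ≥ k−1}` is unimodal: there is
`i*` with `d_k(p_i) ≤ d_k(p_{i+1})` for `k−1 ≤ i < i*`, and `d_k(p_i) ≥ d_k(p_{i+1})`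
for `i ≥ i*` (with `i ≥ k−1`). -/
theorem dd_unimodal_for_small_k (k : ℕ) (hk : k = 1 ∨ k = 2 ∨ k = 3) :
    ∃ istar : ℕ,
      (∀ i : ℕ, k - 1 ≤ i → i < istar → dd k i ≤ dd k (i + 1)) ∧
      (∀ i : ℕ, k - 1 ≤ i → istar ≤ i → dd k (i + 1) ≤ dd k i) := by
  obtain ⟨r, rfl, hr⟩ : ∃ r, k = r + 1 ∧ r ≤ 2 := by
    rcases hk with rfl | rfl | rfl <;> simp
  exact ⟨0, fun i _ hi => absurd hi (Nat.not_lt_zero i), fun i hri _ => dd_succ_le hr (by omega)⟩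
end
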